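/- Let X be a countably infinite set. There exists an injective map from the power set of the power set of ℕ into the set of precomplete clones on X; in particular, there exist 2^{2^{ℵ₀}} pairwise distinct precomplete clones on X. -/

import Mathlib

/-- The set of all finitary operations on `X`: an element of arity index `n`
is an `(n+1)`-ary operation, so that all arities are `≥ 1`. -/
abbrev Ops (X : Type) : Type := Σ n : ℕ, (Fin (n + 1) → X) → X

/-- `opImage f A` is the image `f[A^n]` of the `n`-th power of `A` under the
`n`-ary operation `f`. -/
def opImage {X : Type} (f : Ops X) (A : Set X) : Set X :=
  f.2 '' {x | ∀ i, x i ∈ A}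

/-- An ideal "in our sense": closed under subsets and finite unions, contains all
finite sets, contains at least one infinite set, and does not contain `X`. -/
def IsIdealInOurSense {X : Type} (I : Set (Set X)) : Prop :=
  (∀ A ∈ I, ∀ B ⊆ A, B ∈ I) ∧
  (∀ A ∈ I, ∀ B ∈ I, A ∪ B ∈ I) ∧
  (∀ A : Set X, A.Finite → A ∈ I) ∧
  (∃ A ∈ I, A.Infinite) ∧
  (Set.univ : Set X) ∉ I

/-- The clone `C_I` induced by a collection of sets `I`: all operations mapping
powers of `I`-sets into `I`. -/
def idealClone {X : Type} (I : Set (Set X)) : Set (Ops X) :=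
  {f | ∀ A ∈ I, opImage f A ∈ I}

/-- The unary part `C_I^{(1)}` of the clone induced by `I`. -/
def unaryPart {X : Type} (I : Set (Set X)) : Set (X → X) :=
  {f | ∀ A ∈ I, f '' A ∈ I}

/-- A clone: a set of finitary operations containing all projections and closed
under composition. -/
def IsClone {X : Type} (C : Set (Ops X)) : Prop :=
  (∀ (n : ℕ) (i : Fin (n + 1)), (⟨n, fun x => x i⟩ : Ops X) ∈ C) ∧
  ∀ (n m : ℕ) (f : (Fin (n + 1) → X) → X) (g : Fin (n + 1) → (Fin (m + 1) → X) → X),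
    (⟨n, f⟩ : Ops X) ∈ C → (∀ i, (⟨m, g i⟩ : Ops X) ∈ C) →
    (⟨m, fun x => f fun i => g i x⟩ : Ops X) ∈ C

/-- The clone generated by a set of operations. -/
def cloneGen {X : Type} (F : Set (Ops X)) : Set (Ops X) :=
  ⋂₀ {C : Set (Ops X) | IsClone C ∧ F ⊆ C}

/-- A precomplete clone: a proper clone whose only proper cover is the full clone `O`. -/
def IsPrecompleteClone {X : Type} (C : Set (Ops X)) : Prop :=
  IsClone C ∧ C ≠ Set.univ ∧
  ∀ D : Set (Ops X), IsClone D → C ⊂ D → D = Set.univ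

/-- The regularization `Î` of `I`: all sets `A` such that every infinite subset
of `A` contains an infinite member of `I`. -/
def regularization {X : Type} (I : Set (Set X)) : Set (Set X) :=
  {A | ∀ B ⊆ A, B.Infinite → ∃ C ⊆ B, C.Infinite ∧ C ∈ I}

/-!
For an ideal `J` of subsets of `X`, the clone `C_J` of operations preserving `J` is precomplete as
soon as every set outside `J` contains an infinite set orthogonal to `J` (meeting each member of
`J` in a finite set), which holds for every regularized ideal. Indeed, a clone strictly above
`C_J` contains a unary `h` with `h[A] ∉ J` for some `A ∈ J`; if `T ⊆ h[A]` is infinite and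
orthogonal to `J`, every operation factors through `h` as "code the arguments into `A`, apply
`h`, decode on `T`", and the coding and decoding maps lie in `C_J`.

The `2^ℵ₀` branches of the binary tree are infinite and pairwise almost disjoint. Regularizing
the ideal generated by the branches in a family `S` gives a precomplete clone for each `S`, and a
branch in `S` but not in `S'` lies in the ideal of `S` and is orthogonal to that of `S'`, which
separates the two clones.
-/

open Set

variable {X : Type}

def Orthogonal (J : Set (Set X)) (T : Set X) : Prop :=
  ∀ A ∈ J, (A ∩ T).Finite

theorem Orthogonal.notMem {J : Set (Set X)} {T : Set X} (hT : Orthogonal J T)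
    (hTinf : T.Infinite) : T ∉ J := fun hTJ => hTinf (by simpa using hT T hTJ)

def unaryOp (f : X → X) : Ops X := ⟨0, fun v => f (v 0)⟩

theorem opImage_unaryOp (f : X → X) (A : Set X) : opImage (unaryOp f) A = f '' A := by
  ext y
  constructor
  · rintro ⟨v, hv, rfl⟩
    exact ⟨v 0, hv 0, rfl⟩
  · rintro ⟨a, ha, rfl⟩
    exact ⟨fun _ => a, fun _ => ha, rfl⟩

theorem opImage_finite (f : Ops X) {A : Set X} (hA : A.Finite) : (opImage f A).Finite := by
  refine Finite.image _ ?_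
  simpa [Set.pi] using Finite.pi (t := fun _ : Fin (f.1 + 1) => A) fun _ => hA

theorem IsClone.unaryOp_comp_mem {C : Set (Ops X)} (hC : IsClone C) {u : X → X} {m : ℕ}
    {g : (Fin (m + 1) → X) → X} (hu : unaryOp u ∈ C) (hg : ⟨m, g⟩ ∈ C) :
    (⟨m, fun x => u (g x)⟩ : Ops X) ∈ C :=
  hC.2 0 m _ (fun _ => g) hu fun _ => hg

namespace IsIdealInOurSense

variable {J : Set (Set X)}

theorem biUnion_mem (hJ : IsIdealInOurSense J) {ι : Type*} (s : Finset ι) {f : ι → Set X}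
    (hf : ∀ i ∈ s, f i ∈ J) : (⋃ i ∈ s, f i) ∈ J := by
  classical
  induction s using Finset.induction with
  | empty => simpa using hJ.2.2.1 ∅ finite_empty
  | insert a s _ ih =>
    rw [Finset.set_biUnion_insert]
    exact hJ.2.1 _ (hf a (s.mem_insert_self a)) _
      (ih fun i hi => hf i (Finset.mem_insert_of_mem hi))

theorem iUnion_mem (hJ : IsIdealInOurSense J) {ι : Type*} [Fintype ι] {f : ι → Set X}
    (hf : ∀ i, f i ∈ J) : (⋃ i, f i) ∈ J := by
  simpa using hJ.biUnion_mem Finset.univ fun i _ => hf i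

theorem isClone_idealClone (hJ : IsIdealInOurSense J) : IsClone (idealClone J) := by
  refine ⟨fun n i A hA => hJ.1 A hA _ ?_, fun n m f g hf hg A hA => ?_⟩
  · rintro _ ⟨x, hx, rfl⟩
    exact hx i
  · refine hJ.1 _ (hf _ (hJ.iUnion_mem fun i => hg i A hA)) _ ?_
    rintro _ ⟨x, hx, rfl⟩
    exact ⟨fun i => g i x, fun i => mem_iUnion.2 ⟨i, x, hx, rfl⟩, rfl⟩

theorem mem_idealClone_of_range_subset (hJ : IsIdealInOurSense J) {A : Set X} (hA : A ∈ J)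
    {f : Ops X} (hf : ∀ x, f.2 x ∈ A) : f ∈ idealClone J := by
  intro C _
  refine hJ.1 A hA _ ?_
  rintro _ ⟨x, -, rfl⟩
  exact hf x

theorem unaryOp_mem_idealClone (hJ : IsIdealInOurSense J) {T : Set X} (hT : Orthogonal J T)
    {f : X → X} (hf : ∀ x ∉ T, f x = x) : unaryOp f ∈ idealClone J := by
  intro C hC
  rw [opImage_unaryOp]
  have hsplit : f '' C ⊆ C ∪ f '' (C ∩ T) := by
    rintro _ ⟨c, hc, rfl⟩
    by_cases hcT : c ∈ T
    · exact Or.inr ⟨c, ⟨hc, hcT⟩, rfl⟩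
    · exact Or.inl (by rwa [hf c hcT])
  exact hJ.1 _ (hJ.2.1 C hC _ (hJ.2.2.1 _ ((hT C hC).image f))) _ hsplit

end IsIdealInOurSense

theorem unaryOp_notMem_idealClone {J : Set (Set X)} (hJ : univ ∉ J) {A : Set X} (hA : A ∈ J)
    {f : X → X} (hf : f '' A = univ) : unaryOp f ∉ idealClone J := by
  intro hfJ
  have := hfJ A hA
  rw [opImage_unaryOp, hf] at this
  exact hJ this

theorem exists_image_eq_univ [Countable X] {A : Set X} (hA : A.Infinite) :
    ∃ f : X → X, f '' A = univ ∧ ∀ x ∉ A, f x = x := by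
  have : Infinite A := hA.to_subtype
  have : Nonempty X := ⟨hA.nonempty.some⟩
  obtain ⟨eA⟩ : Nonempty (A ≃ ℕ) := nonempty_equiv_of_countable
  obtain ⟨σ, hσ⟩ := exists_surjective_nat X
  refine ⟨Function.extend Subtype.val (fun a => σ (eA a)) id, eq_univ_of_forall fun y => ?_,
    fun x hx => Function.extend_apply' _ _ _ fun ⟨a, ha⟩ => hx (ha ▸ a.2)⟩
  obtain ⟨n, rfl⟩ := hσ y
  exact ⟨eA.symm n, (eA.symm n).2, by simp⟩

theorem exists_tupling [Countable X] {A : Set X} (hA : A.Infinite) (ι : Type) [Finite ι] :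
    ∃ u : X → ι → X, (∀ x i, u x i ∈ A) ∧ ∀ v : ι → X, (∀ i, v i ∈ A) → ∃ x ∈ A, u x = v := by
  classical
  have : Infinite A := hA.to_subtype
  obtain ⟨eA⟩ : Nonempty (A ≃ ℕ) := nonempty_equiv_of_countable
  obtain ⟨σ, hσ⟩ := exists_surjective_nat (ι → A)
  obtain ⟨a₀⟩ : Nonempty A := inferInstance
  refine ⟨fun x => if h : x ∈ A then fun i => σ (eA ⟨x, h⟩) i else fun _ => a₀, ?_, ?_⟩
  · intro x i
    dsimp only
    split_ifs
    exacts [(σ _ i).2, a₀.2]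
  · intro v hv
    obtain ⟨n, hn⟩ := hσ fun i => ⟨v i, hv i⟩
    refine ⟨eA.symm n, (eA.symm n).2, ?_⟩
    ext i
    simp [hn]

section Precomplete

variable {J : Set (Set X)} {D : Set (Ops X)}

theorem idealClone_ne_univ [Countable X] (hJ : IsIdealInOurSense J) : idealClone J ≠ univ := by
  obtain ⟨A, hA, hAinf⟩ := hJ.2.2.2.1
  obtain ⟨f, hf, -⟩ := exists_image_eq_univ hAinf
  intro hJC
  exact unaryOp_notMem_idealClone hJ.2.2.2.2 hA hf (hJC ▸ mem_univ _)

/-- Precompose `g` with unary operations of `C_J` that code `A` onto `A^(n+1)`. -/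
theorem exists_unaryOp_mem_image_notMem [Countable X] (hJ : IsIdealInOurSense J)
    (hD : IsClone D) (hJD : idealClone J ⊆ D) {g : Ops X} (hgD : g ∈ D)
    (hgJ : g ∉ idealClone J) : ∃ A ∈ J, ∃ h : X → X, unaryOp h ∈ D ∧ h '' A ∉ J := by
  obtain ⟨n, g⟩ := g
  obtain ⟨A, hA, hgA⟩ : ∃ A ∈ J, opImage ⟨n, g⟩ A ∉ J := by simpa [idealClone] using hgJ
  have hAinf : A.Infinite := fun hAfin => hgA (hJ.2.2.1 _ (opImage_finite _ hAfin))
  obtain ⟨u, huA, hu_onto⟩ := exists_tupling hAinf (Fin (n + 1))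
  refine ⟨A, hA, fun x => g (u x), ?_, ?_⟩
  · exact hD.2 n 0 g (fun i v => u (v 0) i) hgD
      fun i => hJD (hJ.mem_idealClone_of_range_subset hA fun v => huA (v 0) i)
  · convert hgA using 2
    ext y
    constructor
    · rintro ⟨x, -, rfl⟩
      exact ⟨u x, huA x, rfl⟩
    · rintro ⟨v, hv, rfl⟩
      obtain ⟨x, hx, rfl⟩ := hu_onto v hv
      exact ⟨x, hx, rfl⟩

/-- Write `f = d ∘ h ∘ s ∘ ι`, with `ι` coding the arguments of `f` injectively into `T`, `s` a
section of `h` from `T` into `A`, and `d` the decoding on `T`, extended by the identity. -/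
theorem eq_univ_of_unaryOp_mem [Countable X] (hJ : IsIdealInOurSense J) (hD : IsClone D)
    (hJD : idealClone J ⊆ D) {A T : Set X} (hA : A ∈ J) {h : X → X} (hhD : unaryOp h ∈ D)
    (hTA : T ⊆ h '' A) (hTinf : T.Infinite) (hTJ : Orthogonal J T) : D = univ := by
  refine eq_univ_of_forall fun ⟨m, f⟩ => ?_
  have hsec : ∀ y : T, ∃ x ∈ A, h x = y := fun y => hTA y.2
  choose s hsA hs using hsec
  have : Infinite T := hTinf.to_subtype
  obtain ⟨enc, henc⟩ := Countable.exists_injective_nat (Fin (m + 1) → X)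
  set ι : (Fin (m + 1) → X) → T := fun v => Infinite.natEmbedding T (enc v)
  have hcode_inj : Function.Injective fun v => (ι v : X) :=
    Subtype.val_injective.comp ((Infinite.natEmbedding T).injective.comp henc)
  set d : X → X := Function.extend (fun v => (ι v : X)) f id
  have htD : (⟨m, fun v => s (ι v)⟩ : Ops X) ∈ D :=
    hJD (hJ.mem_idealClone_of_range_subset hA fun v => hsA _)
  have hdD : unaryOp d ∈ D := hJD <| hJ.unaryOp_mem_idealClone hTJ fun x hx =>
    Function.extend_apply' _ _ _ fun ⟨v, hv⟩ => hx (hv ▸ (ι v).2)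
  have hdht : (fun v => d (h (s (ι v)))) = f := by
    funext v
    rw [hs]
    exact hcode_inj.extend_apply f id v
  simpa [hdht] using hD.unaryOp_comp_mem hdD (hD.unaryOp_comp_mem hhD htD)

theorem isPrecompleteClone_idealClone [Countable X] (hJ : IsIdealInOurSense J)
    (hJ_orth : ∀ B ∉ J, ∃ T ⊆ B, T.Infinite ∧ Orthogonal J T) :
    IsPrecompleteClone (idealClone J) := by
  refine ⟨hJ.isClone_idealClone, idealClone_ne_univ hJ, fun D hD hJD => ?_⟩
  obtain ⟨g, hgD, hgJ⟩ := exists_of_ssubset hJD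
  obtain ⟨A, hA, h, hhD, hhA⟩ := exists_unaryOp_mem_image_notMem hJ hD hJD.subset hgD hgJ
  obtain ⟨T, hTA, hTinf, hTJ⟩ := hJ_orth _ hhA
  exact eq_univ_of_unaryOp_mem hJ hD hJD.subset hA hhD hTA hTinf hTJ

end Precomplete
section Regularization

variable {I : Set (Set X)}

theorem regularization_down : ∀ A ∈ regularization I, ∀ B ⊆ A, B ∈ regularization I :=
  fun _ hA _ hBA C hCB hCinf => hA C (hCB.trans hBA) hCinf

theorem regularization_union :
    ∀ A ∈ regularization I, ∀ B ∈ regularization I, A ∪ B ∈ regularization I := by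
  intro A hA B hB C hCAB hCinf
  have hsplit : C = C ∩ A ∪ C ∩ B := by rw [← inter_union_distrib_left, inter_eq_left.2 hCAB]
  rcases infinite_union.1 (hsplit ▸ hCinf) with hCA | hCB
  · obtain ⟨C', hC', hC'inf, hC'I⟩ := hA _ inter_subset_right hCA
    exact ⟨C', hC'.trans inter_subset_left, hC'inf, hC'I⟩
  · obtain ⟨C', hC', hC'inf, hC'I⟩ := hB _ inter_subset_right hCB
    exact ⟨C', hC'.trans inter_subset_left, hC'inf, hC'I⟩

theorem mem_regularization_of_finite {A : Set X} (hA : A.Finite) : A ∈ regularization I :=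
  fun _ hBA hBinf => (hBinf (hA.subset hBA)).elim

theorem subset_regularization (hI : ∀ A ∈ I, ∀ B ⊆ A, B ∈ I) : I ⊆ regularization I :=
  fun A hA B hBA hBinf => ⟨B, subset_rfl, hBinf, hI A hA B hBA⟩

theorem Orthogonal.regularization {T : Set X} (hT : Orthogonal I T) :
    Orthogonal (regularization I) T := by
  intro A hA
  by_contra hinf
  obtain ⟨C, hC, hCinf, hCI⟩ := hA _ inter_subset_left hinf
  exact hCinf ((hT C hCI).subset (subset_inter subset_rfl (hC.trans inter_subset_right)))

theorem exists_orthogonal_of_notMem_regularization {B : Set X} (hB : B ∉ regularization I) :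
    ∃ T ⊆ B, T.Infinite ∧ Orthogonal (regularization I) T := by
  simp only [_root_.regularization, mem_ofPred_eq, not_forall, not_exists, not_and] at hB
  obtain ⟨T, hTB, hTinf, hT⟩ := hB
  refine ⟨T, hTB, hTinf, fun A hA => by_contra fun hinf => ?_⟩
  obtain ⟨C, hC, hCinf, hCI⟩ := hA _ inter_subset_left hinf
  exact hT C (hC.trans inter_subset_right) hCinf hCI

theorem isIdealInOurSense_regularization (hI : ∀ A ∈ I, ∀ B ⊆ A, B ∈ I)
    (hinf : ∃ A ∈ I, A.Infinite) {T : Set X} (hTinf : T.Infinite) (hT : Orthogonal I T) :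
    IsIdealInOurSense (regularization I) := by
  refine ⟨regularization_down, regularization_union, fun _ => mem_regularization_of_finite,
    ?_, fun huniv => hT.regularization.notMem hTinf (regularization_down _ huniv _ (subset_univ T))⟩
  obtain ⟨A, hA, hAinf⟩ := hinf
  exact ⟨A, subset_regularization hI hA, hAinf⟩

end Regularization

/-- The ideal generated by `G` and the finite sets. -/
def finCover (G : Set (Set X)) : Set (Set X) :=
  {A | ∃ F : Finset (Set X), ↑F ⊆ G ∧ (A \ ⋃₀ ↑F).Finite}

section FinCover

variable {G : Set (Set X)}

theorem finCover_down : ∀ A ∈ finCover G, ∀ B ⊆ A, B ∈ finCover G :=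
  fun _ ⟨F, hFG, hF⟩ _ hBA => ⟨F, hFG, hF.subset (sdiff_subset_sdiff_left hBA)⟩

theorem subset_finCover : G ⊆ finCover G := by
  classical
  intro A hA
  exact ⟨{A}, by simpa using hA, by simp⟩

theorem Orthogonal.finCover {T : Set X} (hT : Orthogonal G T) : Orthogonal (finCover G) T := by
  rintro A ⟨F, hFG, hF⟩
  refine (hF.union (F.finite_toSet.biUnion fun g hg => hT g (hFG hg))).subset ?_
  rintro x ⟨hxA, hxT⟩
  by_cases hx : x ∈ ⋃₀ (F : Set (Set X))
  · obtain ⟨g, hg, hxg⟩ := hx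
    exact Or.inr (mem_biUnion hg ⟨hxg, hxT⟩)
  · exact Or.inl ⟨hxA, hx⟩

end FinCover
theorem idealClone_ne_of_orthogonal [Countable X] {J J' : Set (Set X)} (hJ : univ ∉ J)
    (hJ' : IsIdealInOurSense J') {A : Set X} (hA : A ∈ J) (hAinf : A.Infinite)
    (hAJ' : Orthogonal J' A) : idealClone J ≠ idealClone J' := by
  obtain ⟨f, hf, hf_id⟩ := exists_image_eq_univ hAinf
  intro hJJ'
  exact unaryOp_notMem_idealClone hJ hA hf (hJJ' ▸ hJ'.unaryOp_mem_idealClone hAJ' hf_id)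

section Branches

open Classical in
/-- The node of depth `k` on the branch `r` of the binary tree, encoded as the pair of `k` and
the set of positions below `k` that lie in `r`. -/
noncomputable def treeNode (r : Set ℕ) (k : ℕ) : ℕ × Finset ℕ :=
  (k, (Finset.range k).filter (· ∈ r))

theorem treeNode_eq_treeNode {r r' : Set ℕ} {k k' : ℕ} (h : treeNode r k = treeNode r' k') :
    k = k' ∧ ∀ i < k, (i ∈ r ↔ i ∈ r') := by
  simp only [treeNode, Prod.mk.injEq, Finset.ext_iff, Finset.mem_filter, Finset.mem_range] at h
  obtain ⟨rfl, h⟩ := h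
  exact ⟨rfl, fun i hi => by simpa [hi] using h i⟩

variable (e : (ℕ × Finset ℕ) ⊕ ℕ ≃ X)

def branch (r : Set ℕ) : Set X := range fun k => e (.inl (treeNode r k))

def offTree : Set X := range fun n => e (.inr n)

/-- No code `(0, {j})` is a tree node. -/
def nonNodes : Set X := range fun j => e (.inl (0, {j}))

theorem branch_infinite (r : Set ℕ) : (branch e r).Infinite :=
  infinite_range_of_injective fun _ _ h =>
    (treeNode_eq_treeNode (Sum.inl_injective (e.injective h))).1

theorem branch_inter_branch_finite {r r' : Set ℕ} (hrr' : r ≠ r') :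
    (branch e r ∩ branch e r').Finite := by
  obtain ⟨n, hn⟩ : ∃ n, ¬(n ∈ r ↔ n ∈ r') := by
    by_contra! h
    exact hrr' (ext h)
  refine ((finite_le_nat n).image fun k => e (.inl (treeNode r k))).subset ?_
  rintro _ ⟨⟨k, rfl⟩, k', hk'⟩
  obtain ⟨-, hagree⟩ := treeNode_eq_treeNode (Sum.inl_injective (e.injective hk')).symm
  exact ⟨k, not_lt.1 fun hnk => hn (hagree n hnk), rfl⟩

theorem offTree_infinite : (offTree e).Infinite :=
  infinite_range_of_injective fun _ _ h => Sum.inr_injective (e.injective h)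

theorem nonNodes_infinite : (nonNodes e).Infinite :=
  infinite_range_of_injective fun _ _ h => by
    simpa using Sum.inl_injective (e.injective h)

theorem offTree_inter_branch (r : Set ℕ) : offTree e ∩ branch e r = ∅ := by
  simp [offTree, branch, eq_empty_iff_forall_notMem]

theorem branch_inter_nonNodes (r : Set ℕ) : branch e r ∩ nonNodes e = ∅ := by
  simp only [branch, nonNodes, eq_empty_iff_forall_notMem, mem_inter_iff, mem_range, not_and,
    forall_exists_index]
  rintro _ k rfl ⟨j, hj⟩
  obtain ⟨rfl, hfilter⟩ := Prod.mk.inj (Sum.inl_injective (e.injective hj))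
  simp [Finset.ext_iff] at hfilter

theorem offTree_inter_nonNodes : offTree e ∩ nonNodes e = ∅ := by
  simp [offTree, nonNodes, eq_empty_iff_forall_notMem]

def branchIdeal (S : Set (Set ℕ)) : Set (Set X) :=
  regularization (finCover (insert (offTree e) (branch e '' S)))

theorem isIdealInOurSense_branchIdeal (S : Set (Set ℕ)) :
    IsIdealInOurSense (branchIdeal e S) := by
  refine isIdealInOurSense_regularization finCover_down
    ⟨offTree e, subset_finCover (mem_insert _ _), offTree_infinite e⟩ (nonNodes_infinite e)
    (Orthogonal.finCover ?_)
  rintro _ (rfl | ⟨r, -, rfl⟩)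
  · simp [offTree_inter_nonNodes]
  · simp [branch_inter_nonNodes]

theorem branch_mem_branchIdeal {S : Set (Set ℕ)} {r : Set ℕ} (hr : r ∈ S) :
    branch e r ∈ branchIdeal e S :=
  subset_regularization finCover_down
    (subset_finCover (mem_insert_of_mem _ (mem_image_of_mem _ hr)))

theorem orthogonal_branchIdeal_branch {S : Set (Set ℕ)} {r : Set ℕ} (hr : r ∉ S) :
    Orthogonal (branchIdeal e S) (branch e r) := by
  refine Orthogonal.regularization (Orthogonal.finCover ?_)
  rintro _ (rfl | ⟨r', hr', rfl⟩)
  · simp [offTree_inter_branch]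
  · exact branch_inter_branch_finite e fun h => hr (h ▸ hr')

theorem idealClone_branchIdeal_ne [Countable X] {S S' : Set (Set ℕ)} {r : Set ℕ} (hr : r ∈ S)
    (hr' : r ∉ S') : idealClone (branchIdeal e S) ≠ idealClone (branchIdeal e S') :=
  idealClone_ne_of_orthogonal (isIdealInOurSense_branchIdeal e S).2.2.2.2
    (isIdealInOurSense_branchIdeal e S') (branch_mem_branchIdeal e hr) (branch_infinite e r)
    (orthogonal_branchIdeal_branch e hr')

theorem isPrecompleteClone_idealClone_branchIdeal [Countable X] (S : Set (Set ℕ)) :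
    IsPrecompleteClone (idealClone (branchIdeal e S)) :=
  isPrecompleteClone_idealClone (isIdealInOurSense_branchIdeal e S) fun _ =>
    exists_orthogonal_of_notMem_regularization

end Branches

/-- There is an injection from `P(P(ℕ))` into the set of precomplete clones on
a countably infinite set: there are `2^{2^{ℵ₀}}` precomplete clones. -/
theorem stmt11 {X : Type} [Countable X] [Infinite X] :
    ∃ Φ : Set (Set ℕ) → Set (Ops X),
      Function.Injective Φ ∧ ∀ s, IsPrecompleteClone (Φ s) := by
  obtain ⟨e⟩ : Nonempty ((ℕ × Finset ℕ) ⊕ ℕ ≃ X) := nonempty_equiv_of_countable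
  refine ⟨fun S => idealClone (branchIdeal e S), fun S S' hSS' => ext fun r => ?_,
    isPrecompleteClone_idealClone_branchIdeal e⟩
  exact ⟨fun hr => by_contra fun hr' => idealClone_branchIdeal_ne e hr hr' hSS',
    fun hr' => by_contra fun hr => idealClone_branchIdeal_ne e hr' hr hSS'.symm⟩
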